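/- arXiv:1507.00473 — 4 statements merged into one kernel-verified Lean document; each statement's English description precedes it below -/
import Mathlib

section
/- Let f: ℕ → ℕ be defined by f(m) = 1 if m ≤ 3 and f(m) = 3·f(m − 3⌊m/4⌋) otherwise. Then f(m) = O(m^{log₄ 3}); in particular there is a constant C such that f(m) ≤ C·m for all m ≥ 1, and moreover f(m)/m → 0 as m → ∞. -/
def subsampleCount : ℕ → ℕ
  | m =>
    if _h : m ≤ 3 then 1
    else 3 * subsampleCount (m - 3 * (m / 4))
termination_by m => m
decreasing_by omega

lemma subsample_le_pow : ∀ k m : ℕ, m ≤ 4 ^ k + 2 → subsampleCount m ≤ 3 ^ k := by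
  intro k
  induction k with
  | zero =>
    intro m hm
    rw [subsampleCount]
    simp only [pow_zero] at hm ⊢
    rw [dif_pos (by omega)]
  | succ k ih =>
    intro m hm
    rw [subsampleCount]
    by_cases h : m ≤ 3
    · rw [dif_pos h]
      exact Nat.one_le_pow _ _ (by norm_num)
    · rw [dif_neg h, pow_succ']
      apply Nat.mul_le_mul_left
      apply ih
      have h4 : 4 * (m / 4) + m % 4 = m := Nat.div_add_mod m 4
      have hr : m % 4 < 4 := Nat.mod_lt _ (by norm_num)
      have hp : 1 ≤ 4 ^ k := Nat.one_le_pow _ _ (by norm_num)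
      have he : 4 ^ (k + 1) = 4 * 4 ^ k := by ring
      omega

lemma subsample_le_rpow : ∀ m : ℕ, 1 ≤ m →
    (subsampleCount m : ℝ) ≤ 3 * (m : ℝ) ^ (Real.log 3 / Real.log 4) := by
  intro m hm
  set α : ℝ := Real.log 3 / Real.log 4 with hα
  have hα0 : 0 ≤ α := div_nonneg (Real.log_nonneg (by norm_num)) (Real.log_nonneg (by norm_num))
  set k := Nat.log 4 m with hk
  have h1 : 4 ^ k ≤ m := Nat.pow_log_le_self 4 (by omega)
  have h2 : m < 4 ^ (k + 1) := Nat.lt_pow_succ_log_self (by norm_num) m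
  have hf : subsampleCount m ≤ 3 ^ (k + 1) := subsample_le_pow (k + 1) m (by omega)
  have h43 : (4 : ℝ) ^ α = 3 := by
    have : α = Real.logb 4 3 := rfl
    rw [this]
    exact Real.rpow_logb (by norm_num) (by norm_num) (by norm_num)
  have h3k : ((3 : ℝ)) ^ k ≤ (m : ℝ) ^ α := by
    calc ((3 : ℝ)) ^ k = ((4 : ℝ) ^ α) ^ k := by rw [h43]
      _ = (((4 : ℝ) ^ k)) ^ α := by
          rw [← Real.rpow_natCast ((4 : ℝ) ^ α) k, ← Real.rpow_natCast (4 : ℝ) k,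
            ← Real.rpow_mul (by norm_num), ← Real.rpow_mul (by norm_num), mul_comm]
      _ ≤ (m : ℝ) ^ α := by
          apply Real.rpow_le_rpow (by positivity) _ hα0
          exact_mod_cast h1
  calc (subsampleCount m : ℝ) ≤ ((3 ^ (k + 1) : ℕ) : ℝ) := by exact_mod_cast hf
    _ = 3 * (3 : ℝ) ^ k := by push_cast; ring
    _ ≤ 3 * (m : ℝ) ^ α := by linarith

theorem stmt_6 :
    (∃ C : ℝ, 0 < C ∧ ∀ m : ℕ, 1 ≤ m →
      (subsampleCount m : ℝ) ≤ C * (m : ℝ) ^ (Real.log 3 / Real.log 4)) ∧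
    (∃ C : ℝ, 0 < C ∧ ∀ m : ℕ, 1 ≤ m → (subsampleCount m : ℝ) ≤ C * m) ∧
    Filter.Tendsto (fun m : ℕ => (subsampleCount m : ℝ) / m) Filter.atTop (nhds 0) := by
  set α : ℝ := Real.log 3 / Real.log 4 with hα
  have hα0 : 0 ≤ α := div_nonneg (Real.log_nonneg (by norm_num)) (Real.log_nonneg (by norm_num))
  have hα1 : α < 1 := by
    rw [hα, div_lt_one (Real.log_pos (by norm_num))]
    exact Real.log_lt_log (by norm_num) (by norm_num)
  refine ⟨⟨3, by norm_num, subsample_le_rpow⟩, ⟨3, by norm_num, ?_⟩, ?_⟩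
  · intro m hm
    have h := subsample_le_rpow m hm
    have hm1 : (1 : ℝ) ≤ (m : ℝ) := by exact_mod_cast hm
    have : (m : ℝ) ^ α ≤ (m : ℝ) ^ (1 : ℝ) :=
      Real.rpow_le_rpow_of_exponent_le hm1 hα1.le
    rw [Real.rpow_one] at this
    linarith
  · have htend : Filter.Tendsto (fun m : ℕ => 3 * (m : ℝ) ^ (α - 1)) Filter.atTop (nhds 0) := by
      have h1 : Filter.Tendsto (fun x : ℝ => x ^ (-(1 - α))) Filter.atTop (nhds 0) :=
        tendsto_rpow_neg_atTop (by linarith)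
      have h2 := (h1.comp (tendsto_natCast_atTop_atTop (R := ℝ))).const_mul (3 : ℝ)
      rw [mul_zero] at h2
      have : -(1 - α) = α - 1 := by ring
      rw [this] at h2
      exact h2
    refine squeeze_zero' ?_ ?_ htend
    · filter_upwards with m
      positivity
    · filter_upwards [Filter.eventually_ge_atTop 1] with m hm
      have h := subsample_le_rpow m hm
      have hm0 : (0 : ℝ) < (m : ℝ) := by exact_mod_cast hm
      rw [div_le_iff₀ hm0]
      have hmul : (m : ℝ) ^ (α - 1) * (m : ℝ) = (m : ℝ) ^ α := by
        rw [← Real.rpow_add_one (ne_of_gt hm0), sub_add_cancel]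
      calc (subsampleCount m : ℝ) ≤ 3 * (m : ℝ) ^ α := h
        _ = 3 * (m : ℝ) ^ (α - 1) * (m : ℝ) := by rw [mul_assoc, hmul]
end

section
/- Let m = 4^ℓ and n = 3^ℓ for some ℓ ∈ ℕ. For i ∈ {1,…,m−1} with base-4 digits (i₀,…,i_{ℓ−1}) and j ∈ {0,…,n−1} with base-3 digits (j₀,…,j_{ℓ−1}), define the membership relation: i ∈ T_j iff, letting t* be the largest t with i_t ≠ 0, one has i_{t*} − 1 ≠ j_{t*}. Then for every i ∈ {1,…,m−1}, the number of j ∈ {0,…,n−1} with i ∈ T_j equals 2·3^{ℓ−1} (i.e., exactly 2/3 of all subsamples contain the i-th point). -/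
/-!
The leading base-4 digit of `i` sits at position `t = log 4 i`, so `i ∈ T_j` only says that the
`t`-th base-3 digit of `j` avoids one value `c < 3`. Splitting `j < 3 ^ ℓ` as
`j = r + 3 ^ t * (d + 3 * q)` with `r < 3 ^ t`, `d < 3`, `q < 3 ^ (ℓ - 1 - t)` shows that every
value of that digit is taken by exactly `3 ^ (ℓ - 1)` indices, leaving `3 ^ ℓ - 3 ^ (ℓ - 1)`.
-/

/-- Direct index description of subsample membership: point `i` (with base-4 digits)
belongs to subsample `j` (with base-3 digits) iff, letting `t*` be the largest `t < ℓ`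
with `i_t ≠ 0`, one has `i_{t*} - 1 ≠ j_{t*}`. -/
def inSubsample (ℓ i j : ℕ) : Prop :=
  ∃ t < ℓ, (i / 4 ^ t % 4 ≠ 0) ∧ (∀ s, t < s → s < ℓ → i / 4 ^ s % 4 = 0) ∧
    (i / 4 ^ t % 4) - 1 ≠ j / 3 ^ t % 3

open Finset

namespace Nat

theorem card_filter_range_mul_eq_card_filter_product (T N : ℕ) (p : ℕ → ℕ → Prop)
    [∀ r q, Decidable (p r q)] :
    #{j ∈ range (T * N) | p (j % T) (j / T)} = #{x ∈ range T ×ˢ range N | p x.1 x.2} := by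
  refine card_nbij' (fun j => (j % T, j / T)) (fun x => x.1 + T * x.2) ?_ ?_ ?_ ?_
  · intro j hj
    simp only [mem_coe, mem_filter, mem_range, mem_product] at hj ⊢
    have hT : 0 < T := Nat.pos_of_ne_zero (by rintro rfl; simp at hj)
    exact ⟨⟨Nat.mod_lt _ hT, Nat.div_lt_of_lt_mul hj.1⟩, hj.2⟩
  · rintro ⟨r, q⟩ hx
    simp only [mem_coe, mem_filter, mem_range, mem_product] at hx ⊢
    have hT : 0 < T := by omega
    refine ⟨?_, ?_⟩
    · calc r + T * q < T * (q + 1) := by rw [mul_add]; omega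
        _ ≤ T * N := Nat.mul_le_mul_left _ hx.1.2
    · rw [Nat.add_mul_mod_self_left, Nat.add_mul_div_left _ _ hT, Nat.mod_eq_of_lt hx.1.1,
        Nat.div_eq_of_lt hx.1.1, zero_add]
      exact hx.2
  · intro j _
    exact Nat.mod_add_div j T
  · rintro ⟨r, q⟩ hx
    simp only [mem_coe, mem_filter, mem_range, mem_product] at hx
    have hT : 0 < T := by omega
    simp [Nat.add_mul_mod_self_left, Nat.add_mul_div_left _ _ hT, Nat.mod_eq_of_lt hx.1.1,
        Nat.div_eq_of_lt hx.1.1]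

theorem card_filter_range_mul_div (T N : ℕ) (p : ℕ → Prop) [DecidablePred p] :
    #{j ∈ range (T * N) | p (j / T)} = T * #{q ∈ range N | p q} := by
  rw [card_filter_range_mul_eq_card_filter_product T N (fun _ q => p q), filter_product_right,
    card_product, card_range]

theorem card_filter_range_mul_mod (T N : ℕ) (p : ℕ → Prop) [DecidablePred p] :
    #{j ∈ range (T * N) | p (j % T)} = #{r ∈ range T | p r} * N := by
  rw [card_filter_range_mul_eq_card_filter_product T N (fun r _ => p r), filter_product_left,
    card_product, card_range]

theorem card_filter_range_pow_digit_eq {b ℓ t c : ℕ} (ht : t < ℓ) (hc : c < b) :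
    #{j ∈ range (b ^ ℓ) | j / b ^ t % b = c} = b ^ (ℓ - 1) := by
  obtain ⟨k, rfl⟩ := Nat.exists_eq_add_of_lt ht
  have hsplit : b ^ (t + k + 1) = b ^ t * (b * b ^ k) := by ring
  rw [hsplit, card_filter_range_mul_div _ _ (· % b = c), card_filter_range_mul_mod _ _ (· = c),
    filter_eq' (range b) c, if_pos (mem_range.2 hc), card_singleton, one_mul, ← pow_add,
    Nat.add_sub_cancel]

theorem div_pow_log_lt {b : ℕ} (hb : 1 < b) (i : ℕ) : i / b ^ log b i < b :=
  Nat.div_lt_of_lt_mul (by simpa [pow_succ] using lt_pow_succ_log_self hb i)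

theorem div_pow_log_mod_ne_zero {b i : ℕ} (hb : 1 < b) (hi : i ≠ 0) :
    i / b ^ log b i % b ≠ 0 := by
  rw [Nat.mod_eq_of_lt (div_pow_log_lt hb i)]
  exact (Nat.div_pos (pow_log_le_self b hi) (by positivity)).ne'

theorem digit_ne_zero_and_higher_digits_zero_iff {b i ℓ t : ℕ} (hb : 1 < b) (hi : i < b ^ ℓ) :
    (i / b ^ t % b ≠ 0 ∧ ∀ s, t < s → s < ℓ → i / b ^ s % b = 0) ↔
      i ≠ 0 ∧ t = log b i := by
  constructor
  · rintro ⟨hne, hhigher⟩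
    have hi0 : i ≠ 0 := by rintro rfl; simp at hne
    have hle : t ≤ log b i := by
      refine le_log_of_pow_le hb (Nat.le_of_not_lt fun hlt => hne ?_)
      rw [Nat.div_eq_of_lt hlt, Nat.zero_mod]
    refine ⟨hi0, hle.antisymm (Nat.le_of_not_lt fun hlt => ?_)⟩
    exact div_pow_log_mod_ne_zero hb hi0 (hhigher _ hlt (log_lt_of_lt_pow hi0 hi))
  · rintro ⟨hi0, rfl⟩
    refine ⟨div_pow_log_mod_ne_zero hb hi0, fun s hs _ => ?_⟩
    rw [Nat.div_eq_of_lt (lt_pow_of_log_lt hb hs), Nat.zero_mod]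

end Nat

open Nat in
theorem inSubsample_iff {ℓ i j : ℕ} (hi0 : i ≠ 0) (hi : i < 4 ^ ℓ) :
    inSubsample ℓ i j ↔ j / 3 ^ log 4 i % 3 ≠ i / 4 ^ log 4 i % 4 - 1 := by
  have leading {t : ℕ} := digit_ne_zero_and_higher_digits_zero_iff (t := t) (by norm_num) hi
  constructor
  · rintro ⟨t, -, hne, hhigher, h⟩
    obtain ⟨-, rfl⟩ := leading.1 ⟨hne, hhigher⟩
    exact Ne.symm h
  · intro h
    obtain ⟨hne, hhigher⟩ := leading.2 ⟨hi0, rfl⟩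
    exact ⟨log 4 i, log_lt_of_lt_pow hi0 hi, hne, hhigher, Ne.symm h⟩

open Classical in
theorem stmt_7 (ℓ : ℕ) (i : ℕ) (hi1 : 1 ≤ i) (hi2 : i < 4 ^ ℓ) :
    ((Finset.range (3 ^ ℓ)).filter (fun j => inSubsample ℓ i j)).card = 2 * 3 ^ (ℓ - 1) := by
  have hi0 : i ≠ 0 := by omega
  have hlog : Nat.log 4 i < ℓ := Nat.log_lt_of_lt_pow hi0 hi2
  have hdigit : i / 4 ^ Nat.log 4 i % 4 - 1 < 3 := by
    have := Nat.mod_lt (i / 4 ^ Nat.log 4 i) (show 0 < 4 by norm_num)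
    omega
  rw [filter_congr fun j _ => inSubsample_iff hi0 hi2, filter_not,
    card_sdiff_of_subset (filter_subset _ _), card_range,
    Nat.card_filter_range_pow_digit_eq hlog hdigit]
  obtain ⟨k, rfl⟩ := Nat.exists_eq_add_of_lt hlog
  rw [Nat.add_sub_cancel, pow_succ]
  omega
end

section
/- For every ε ∈ (0, 1/2) and δ ∈ (0, 1), any learning algorithm that (ε,δ)-PAC learns a concept class C containing two classifiers h₀, h₁ and a point x* with h₀(x*) ≠ h₁(x*) requires at least ((1−ε)/ε)·ln(1/δ) samples. More precisely, if m < ((1−ε)/ε)·ln(1/δ), then there exist a target f ∈ {h₀,h₁} and a distribution P such that with probability greater than δ the algorithm's output has error greater than ε. -/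
/-!
Put mass `1 - p` on a point `x₀` where `h₀` and `h₁` agree and mass `p` on a point `x*` where
they differ, with `p` slightly above `ε`. With probability `(1 - p)^m > δ` every sample point is
`x₀`; the learner then sees the same labelled sample whichever of `h₀, h₁` is the target, so its
output is wrong at `x*` for one of them, and that target has error at least `p > ε`.
-/

open MeasureTheory Set Filter Topology

namespace Real

/-- The bound `δ < (1 - ε)^m` follows from `log (1 - ε) ≥ -ε / (1 - ε)`. -/
lemma lt_one_sub_pow_of_lt_mul_log {ε δ : ℝ} (hε0 : 0 < ε) (hε1 : ε < 1) (hδ : 0 < δ) {m : ℕ}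
    (hm : (m : ℝ) < ((1 - ε) / ε) * log (1 / δ)) : δ < (1 - ε) ^ m := by
  have h1ε : 0 < 1 - ε := by linarith
  have hlog : -(ε / (1 - ε)) ≤ log (1 - ε) := by
    have := one_sub_inv_le_log_of_pos h1ε
    rwa [show 1 - (1 - ε)⁻¹ = -(ε / (1 - ε)) by field_simp; ring] at this
  have hm' : (m : ℝ) * (ε / (1 - ε)) < -log δ := by
    have := mul_lt_mul_of_pos_right hm (div_pos hε0 h1ε)
    rwa [show (1 - ε) / ε * log (1 / δ) * (ε / (1 - ε)) = -log δ by
      rw [one_div, log_inv]; field_simp] at this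
  rw [← log_lt_log_iff hδ (pow_pos h1ε m), log_pow]
  nlinarith [(Nat.cast_nonneg m : (0 : ℝ) ≤ m)]

end Real

lemma exists_lt_one_sub_pow_of_lt {ε δ : ℝ} {m : ℕ} (hε1 : ε < 1) (h : δ < (1 - ε) ^ m) :
    ∃ p, ε < p ∧ p < 1 ∧ δ < (1 - p) ^ m := by
  have hcont : Continuous fun p : ℝ => (1 - p) ^ m := by fun_prop
  have hnear : ∀ᶠ p in 𝓝[>] ε, δ < (1 - p) ^ m :=
    nhdsWithin_le_nhds <| hcont.continuousAt.eventually (lt_mem_nhds h)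
  obtain ⟨p, ⟨hεp, hp1⟩, hp⟩ := (Filter.Eventually.and (Ioo_mem_nhdsGT hε1) hnear).exists
  exact ⟨p, hεp, hp1, hp⟩

namespace MeasureTheory.Measure

variable {α : Type*} [MeasurableSpace α]

noncomputable def twoPoint (p : ℝ) (x y : α) : Measure α :=
  ENNReal.ofReal (1 - p) • dirac x + ENNReal.ofReal p • dirac y

lemma isProbabilityMeasure_twoPoint {p : ℝ} (hp0 : 0 ≤ p) (hp1 : p ≤ 1) (x y : α) :
    IsProbabilityMeasure (twoPoint p x y) := by
  constructor
  simp only [twoPoint, add_apply, smul_apply, dirac_apply_of_mem (mem_univ _), smul_eq_mul,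
    mul_one]
  rw [← ENNReal.ofReal_add (by linarith) hp0]
  simp

lemma ofReal_one_sub_le_twoPoint {s : Set α} {x : α} (hx : x ∈ s) (p : ℝ) (y : α) :
    ENNReal.ofReal (1 - p) ≤ twoPoint p x y s := by
  simp only [twoPoint, add_apply, smul_apply, dirac_apply_of_mem hx, smul_eq_mul, mul_one]
  exact le_self_add

lemma ofReal_le_twoPoint {s : Set α} {y : α} (hy : y ∈ s) (p : ℝ) (x : α) :
    ENNReal.ofReal p ≤ twoPoint p x y s := by
  simp only [twoPoint, add_apply, smul_apply, dirac_apply_of_mem hy, smul_eq_mul, mul_one]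
  exact le_add_self

lemma pow_le_pi_const {P : Measure α} [SigmaFinite P] {x : α} {a : ENNReal} (ha : a ≤ P {x})
    (m : ℕ) :
    a ^ m ≤ Measure.pi (fun _ : Fin m => P) {fun _ => x} := by
  rw [pi_singleton, Finset.prod_const, Finset.card_univ, Fintype.card_fin]
  gcongr

end MeasureTheory.Measure

theorem stmt_13_general {𝒳 : Type*} [MeasurableSpace 𝒳]
    (h₀ h₁ : 𝒳 → ℤ) (xstar x₀ : 𝒳) (hdiff : h₀ xstar ≠ h₁ xstar) (hagree : h₀ x₀ = h₁ x₀)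
    (ε δ : ℝ) (hε : ε ∈ Set.Ioo (0 : ℝ) (1 / 2)) (hδ : δ ∈ Set.Ioo (0 : ℝ) 1)
    (A : (m : ℕ) → (Fin m → 𝒳 × ℤ) → 𝒳 → ℤ)
    (m : ℕ) (hm : (m : ℝ) < ((1 - ε) / ε) * Real.log (1 / δ)) :
    ∃ f ∈ ({h₀, h₁} : Set (𝒳 → ℤ)), ∃ P : Measure 𝒳, IsProbabilityMeasure P ∧
      δ < ((Measure.pi fun _ : Fin m => P)
        {S | ε < (P {x | A m (fun i => (S i, f (S i))) x ≠ f x}).toReal}).toReal := by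
  obtain ⟨hε0, hε1⟩ := hε
  replace hε1 : ε < 1 := by linarith
  obtain ⟨p, hεp, hp1, hδp⟩ := exists_lt_one_sub_pow_of_lt hε1
    (Real.lt_one_sub_pow_of_lt_mul_log hε0 hε1 hδ.1 hm)
  set P := Measure.twoPoint p x₀ xstar
  have hP : IsProbabilityMeasure P :=
    Measure.isProbabilityMeasure_twoPoint (hε0.trans hεp).le hp1.le x₀ xstar
  obtain ⟨f, hf, hfx₀, hwrong⟩ : ∃ f ∈ ({h₀, h₁} : Set (𝒳 → ℤ)),
      f x₀ = h₀ x₀ ∧ A m (fun _ => (x₀, h₀ x₀)) xstar ≠ f xstar := by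
    by_cases h : A m (fun _ => (x₀, h₀ x₀)) xstar = h₀ xstar
    · exact ⟨h₁, by simp, hagree.symm, h ▸ hdiff⟩
    · exact ⟨h₀, by simp, rfl, h⟩
  refine ⟨f, hf, P, hP, ?_⟩
  have hconst : {fun _ => x₀} ⊆
      {S : Fin m → 𝒳 | ε < (P {x | A m (fun i => (S i, f (S i))) x ≠ f x}).toReal} := by
    rintro _ rfl
    refine hεp.trans_le (ENNReal.ofReal_le_iff_le_toReal (measure_ne_top _ _) |>.mp ?_)
    exact Measure.ofReal_le_twoPoint (by simpa [hfx₀] using hwrong) p x₀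
  have hpow : ENNReal.ofReal ((1 - p) ^ m) ≤ Measure.pi (fun _ : Fin m => P) {fun _ => x₀} := by
    rw [ENNReal.ofReal_pow (by linarith)]
    exact Measure.pow_le_pi_const (Measure.ofReal_one_sub_le_twoPoint (mem_singleton x₀) p xstar) m
  calc δ < (1 - p) ^ m := hδp
    _ ≤ (Measure.pi (fun _ : Fin m => P) {fun _ => x₀}).toReal :=
      (ENNReal.ofReal_le_iff_le_toReal (measure_ne_top _ _)).mp hpow
    _ ≤ _ := ENNReal.toReal_mono (measure_ne_top _ _) (measure_mono hconst)

/-- Lower bound `((1-ε)/ε)·ln(1/δ)` on PAC sample complexity: if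
`m < ((1-ε)/ε)·ln(1/δ)`, then for any (deterministic) learning algorithm `A` there are a
target `f ∈ {h₀, h₁}` and a data distribution `P` under which, with probability greater
than `δ` over the i.i.d. sample, the output of `A` has error greater than `ε`. -/
theorem stmt_13 {𝒳 : Type*} [MeasurableSpace 𝒳] [MeasurableSingletonClass 𝒳]
    (h₀ h₁ : 𝒳 → ℤ) (xstar x₀ : 𝒳) (hdiff : h₀ xstar ≠ h₁ xstar) (hagree : h₀ x₀ = h₁ x₀)
    (ε δ : ℝ) (hε : ε ∈ Set.Ioo (0 : ℝ) (1 / 2)) (hδ : δ ∈ Set.Ioo (0 : ℝ) 1)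
    (A : (m : ℕ) → (Fin m → 𝒳 × ℤ) → 𝒳 → ℤ)
    (m : ℕ) (hm : (m : ℝ) < ((1 - ε) / ε) * Real.log (1 / δ)) :
    ∃ f ∈ ({h₀, h₁} : Set (𝒳 → ℤ)), ∃ P : Measure 𝒳, IsProbabilityMeasure P ∧
      δ < ((Measure.pi fun _ : Fin m => P)
        {S | ε < (P {x | A m (fun i => (S i, f (S i))) x ≠ f x}).toReal}).toReal :=
  stmt_13_general h₀ h₁ xstar x₀ hdiff hagree ε δ hε hδ A m hm
end

section
/- Let h₁, h₂, h₃ be classifiers and let G be a finite multiset of classifiers partitioned into G₁, G₂, G₃ of equal sizes, with target f. Suppose for each x: the majority vote h_maj(x) of all classifiers in G satisfies (a) h_maj(x) agrees with h_i(x) for at least one i ∈ {1,2,3} chosen so that (b) at least 1/4 of the classifiers in G \ G_i (i.e., G_j ∪ G_k with {j,k} = {1,2,3}\{i}) agree with h_maj(x). Then for every x with h_maj(x) ≠ f(x), choosing i uniformly from {1,2,3} and g uniformly from G \ G_i, the probability that both h_i(x) ≠ f(x) and g(x) ≠ f(x) is at least 1/12, provided h_i is the majority vote of G_i for each i. -/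
/-!
Fix `x` with `hmaj x ≠ f x` and take the block `i` given by the hypothesis. Since
`h i x = hmaj x ≠ f x`, every `g` outside `Gᵢ` that agrees with `hmaj x` forms an error pair
with `h i`, so at least `k / 2` of the `2k` choices of `g` give an error pair: the `i`-th term
of the average over blocks is at least `1/4`, and the average is at least a third of that.
-/

open Finset

theorem card_filter_eq_le_card_filter_ne {α β : Type*} [DecidableEq β] (s : Finset α)
    (out : α → Prop) [DecidablePred out] (g : α → β) {u v w : β} (hu : u = v) (hvw : v ≠ w) :
    #(s.filter fun t => out t ∧ g t = v) ≤ #(s.filter fun t => out t ∧ u ≠ w ∧ g t ≠ w) :=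
  card_le_card <| monotone_filter_right s fun _ _ ⟨hout, hgt⟩ =>
    ⟨hout, hu ▸ hvw, hgt ▸ hvw⟩

theorem quarter_le_div_of_le_two_mul {k m n : ℕ} (hk : 1 ≤ k) (hkm : k ≤ 2 * m) (hmn : m ≤ n) :
    (1 / 4 : ℝ) ≤ n / (2 * k) := by
  have hk' : (1 : ℝ) ≤ k := by exact_mod_cast hk
  have hkn : (k : ℝ) ≤ 2 * n := by exact_mod_cast hkm.trans (by omega)
  rw [le_div_iff₀ (by positivity)]
  linarith

theorem stmt_19_general {𝒳 : Type*} (k : ℕ) (hk : 1 ≤ k) (g : ℕ → 𝒳 → ℤ) (f : 𝒳 → ℤ)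
    (hmaj : 𝒳 → ℤ)
    (h : ℕ → 𝒳 → ℤ)
    (hyp : ∀ x : 𝒳, ∃ i < 3, h i x = hmaj x ∧
      k ≤ 2 * ((Finset.range (3 * k)).filter
        (fun t => ¬(i * k ≤ t ∧ t < (i + 1) * k) ∧ g t x = hmaj x)).card) :
    ∀ x : 𝒳, hmaj x ≠ f x →
      (1 / 12 : ℝ) ≤ (1 / 3) * ∑ i ∈ Finset.range 3,
        (((Finset.range (3 * k)).filter
          (fun t => ¬(i * k ≤ t ∧ t < (i + 1) * k) ∧ h i x ≠ f x ∧ g t x ≠ f x)).card : ℝ)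
          / (2 * k) := by
  intro x hx
  obtain ⟨i, hi, hie, hagree⟩ := hyp x
  have hterm := quarter_le_div_of_le_two_mul hk hagree
    (card_filter_eq_le_card_filter_ne _ _ (g · x) hie hx)
  calc (1 / 12 : ℝ) = 1 / 3 * (1 / 4) := by norm_num
    _ ≤ _ := by
      gcongr
      refine le_trans ?_ (single_le_sum (fun j _ => ?_) (mem_range.mpr hi))
      · exact hterm
      · positivity

/-- `G` is modeled as the classifiers `g 0, …, g (3k-1)`, with block `Gᵢ` the indices
`t ∈ [i·k, (i+1)·k)`. `hmaj` is the overall majority vote, `h i` the block majorities.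
Choosing `i` uniformly from `{0,1,2}` and then `g t` uniformly from `G \ Gᵢ`, the
probability that both `h i` and `g t` err at `x` is at least `1/12` whenever `hmaj`
errs at `x`. -/
theorem stmt_19 {𝒳 : Type*} (k : ℕ) (hk : 1 ≤ k) (g : ℕ → 𝒳 → ℤ) (f : 𝒳 → ℤ)
    (hg : ∀ t < 3 * k, ∀ x, g t x = 1 ∨ g t x = -1)
    (hmaj : 𝒳 → ℤ)
    (hhmaj : ∀ x, hmaj x = if 0 ≤ ∑ t ∈ Finset.range (3 * k), g t x then 1 else -1)
    (h : ℕ → 𝒳 → ℤ)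
    (hh : ∀ i < 3, ∀ x,
      h i x = if 0 ≤ ∑ t ∈ Finset.range k, g (i * k + t) x then 1 else -1)
    (hyp : ∀ x : 𝒳, ∃ i < 3, h i x = hmaj x ∧
      k ≤ 2 * ((Finset.range (3 * k)).filter
        (fun t => ¬(i * k ≤ t ∧ t < (i + 1) * k) ∧ g t x = hmaj x)).card) :
    ∀ x : 𝒳, hmaj x ≠ f x →
      (1 / 12 : ℝ) ≤ (1 / 3) * ∑ i ∈ Finset.range 3,
        (((Finset.range (3 * k)).filter
          (fun t => ¬(i * k ≤ t ∧ t < (i + 1) * k) ∧ h i x ≠ f x ∧ g t x ≠ f x)).card : ℝ)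
          / (2 * k) :=
  stmt_19_general k hk g f hmaj h hyp
end
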